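/- Let 0 < R₀ < R, let S = {x ∈ ℝ³ : |x| = R}, and let y = (0,0,−R). Then S*(y) = {x ∈ S : x₃ > h}, where h = 2R(1 − R₀²/R²) − R = R − 2R₀²/R. (Computation of the infimum h of the third coordinate over the shadow region, used in the proof of Lemma 1.) -/

import Mathlib

/-- The shadow region `S*(y) = {x ∈ S : (−y)·(x−y) > |x−y|·√(R²−R₀²)}`. -/
def Sstar (R R₀ : ℝ) (y : EuclideanSpace ℝ (Fin 3)) : Set (EuclideanSpace ℝ (Fin 3)) :=
  {x | ‖x‖ = R ∧ ‖x - y‖ * Real.sqrt (R ^ 2 - R₀ ^ 2) < (inner ℝ (-y) (x - y) : ℝ)}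

/-- For `y = (0,0,−R)`, the shadow region is exactly the open spherical cap
`{x ∈ S : x₃ > h}` with `h = 2R(1 − R₀²/R²) − R`. -/
theorem stmt5 (R R₀ : ℝ) (hR₀ : 0 < R₀) (hR : R₀ < R)
    (y : EuclideanSpace ℝ (Fin 3))
    (hy : y = (WithLp.equiv 2 (Fin 3 → ℝ)).symm ![0, 0, -R]) :
    Sstar R R₀ y =
      {x : EuclideanSpace ℝ (Fin 3) | ‖x‖ = R ∧ 2 * R * (1 - R₀ ^ 2 / R ^ 2) - R < x 2} := by
  have hRpos : (0:ℝ) < R := hR₀.trans hR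
  ext x
  simp only [Sstar, Set.mem_setOf_eq]
  refine and_congr_right fun hx => ?_
  set a := x 0 with ha
  set b := x 1 with hb
  set c := x 2 with hc
  have hsum : a ^ 2 + b ^ 2 + c ^ 2 = R ^ 2 := by
    have h1 : ‖x‖ ^ 2 = ∑ i, ‖x i‖ ^ 2 := by
      rw [EuclideanSpace.norm_eq, Real.sq_sqrt]
      positivity
    rw [hx] at h1
    simpa [Fin.sum_univ_three, Real.norm_eq_abs, sq_abs] using h1.symm
  have hinner : (inner ℝ (-y) (x - y) : ℝ) = R * (R + c) := by
    subst hy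
    simp [PiLp.inner_apply, Fin.sum_univ_three, RCLike.inner_apply, conj_trivial,
      PiLp.toLp_apply]
    rw [hc]; ring
  have hnorm : ‖x - y‖ = Real.sqrt (2 * R * (R + c)) := by
    subst hy
    rw [EuclideanSpace.norm_eq]
    congr 1
    simp [Fin.sum_univ_three, Real.norm_eq_abs, sq_abs, PiLp.toLp_apply]
    nlinarith [hsum]
  rw [hinner, hnorm, ← Real.sqrt_mul (by nlinarith [sq_nonneg (R + c), sq_nonneg a, sq_nonneg b])]
  have htgt : 2 * R * (1 - R₀ ^ 2 / R ^ 2) - R = (R ^ 2 - 2 * R₀ ^ 2) / R := by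
    field_simp; ring
  rw [htgt, div_lt_iff₀ hRpos]
  constructor
  · intro h
    have hpos : 0 < R * (R + c) := lt_of_le_of_lt (Real.sqrt_nonneg _) h
    have hcpos : 0 < R + c := by nlinarith
    have key := (Real.sqrt_lt' hpos).mp h
    have h5 : 2 * (R ^ 2 - R₀ ^ 2) < R * (R + c) := by nlinarith [key, hpos]
    nlinarith [h5]
  · intro h
    have hcpos : 0 < R + c := by nlinarith [sq_nonneg R₀]
    have hpos : 0 < R * (R + c) := mul_pos hRpos hcpos
    refine (Real.sqrt_lt' hpos).mpr ?_
    nlinarith [mul_pos hRpos hcpos]
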